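/- arXiv:2007.09014 — 6 statements merged into one kernel-verified Lean document; each statement's English description precedes it below -/
import Mathlib

section
/- If λ ∈ ℂ satisfies Re λ ≥ 0 and (λ+α)(λ+δ) = β e^{-λτ}(1 - e^{-(λ+δ)l/f}) for real parameters α > 0, β, δ ∈ ℝ, l, f > 0, τ ≥ 0, then |λ| ≤ (|δ| + √(δ² + 8|β|))/2. -/
open Complex

/-!
Both exponential factors have modulus at most one on the closed right half-plane, so a
root satisfies `‖λ + α‖ ‖λ + δ‖ ≤ 2|β|`. Since `α, δ ≥ 0` and `Re λ ≥ 0`, each factor is at least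
`‖λ‖`, hence `(2‖λ‖)² ≤ 8|β| ≤ δ² + 8|β|`.
-/

namespace Complex

theorem re_neg_mul_ofReal_nonpos {z : ℂ} {t : ℝ} (hz : 0 ≤ z.re) (ht : 0 ≤ t) :
    (-z * t).re ≤ 0 := by
  simpa using mul_nonneg hz ht

theorem norm_exp_le_one {z : ℂ} (hz : z.re ≤ 0) : ‖exp z‖ ≤ 1 := by
  rw [norm_exp]
  exact Real.exp_le_one_iff.mpr hz

theorem norm_one_sub_exp_le_two {z : ℂ} (hz : z.re ≤ 0) : ‖1 - exp z‖ ≤ 2 :=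
  calc ‖1 - exp z‖ ≤ ‖(1 : ℂ)‖ + ‖exp z‖ := norm_sub_le _ _
    _ ≤ 1 + 1 := by rw [norm_one]; gcongr; exact norm_exp_le_one hz
    _ = 2 := by norm_num

theorem norm_le_norm_add_ofReal {z : ℂ} {a : ℝ} (hz : 0 ≤ z.re) (ha : 0 ≤ a) :
    ‖z‖ ≤ ‖z + a‖ := by
  rw [← sq_le_sq₀ (norm_nonneg _) (norm_nonneg _), Complex.sq_norm, Complex.sq_norm,
    normSq_apply, normSq_apply]
  simp only [add_re, ofReal_re, add_im, ofReal_im, add_zero]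
  nlinarith

theorem sq_norm_le_of_mul_eq {z u v : ℂ} {α δ β : ℝ} (hz : 0 ≤ z.re) (hα : 0 ≤ α)
    (hδ : 0 ≤ δ) (hu : ‖u‖ ≤ 1) (hv : ‖v‖ ≤ 2) (h : (z + α) * (z + δ) = β * u * v) :
    ‖z‖ ^ 2 ≤ 2 * |β| :=
  calc ‖z‖ ^ 2 = ‖z‖ * ‖z‖ := sq _
    _ ≤ ‖z + α‖ * ‖z + δ‖ := by
      gcongr
      exacts [norm_le_norm_add_ofReal hz hα, norm_le_norm_add_ofReal hz hδ]
    _ = |β| * ‖u‖ * ‖v‖ := by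
      rw [← norm_mul, h, norm_mul, norm_mul, norm_real, Real.norm_eq_abs]
    _ ≤ |β| * 1 * 2 := by gcongr
    _ = 2 * |β| := by ring

end Complex

/-- Any characteristic root `λ` with `Re λ ≥ 0` satisfies
`|λ| ≤ (|δ| + √(δ² + 8|β|))/2`. -/
theorem eigenvalue_bound (α β δ l f τ : ℝ) (hα : 0 < α) (hδ : 0 ≤ δ)
    (hl : 0 < l) (hf : 0 < f) (hτ : 0 ≤ τ) (lam : ℂ) (hre : 0 ≤ lam.re)
    (hroot : (lam + α) * (lam + δ) =
      (β : ℂ) * Complex.exp (-lam * τ) * (1 - Complex.exp (-(lam + δ) * l / f))) :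
    ‖lam‖ ≤ (|δ| + Real.sqrt (δ ^ 2 + 8 * |β|)) / 2 := by
  have hdelay : ‖exp (-lam * τ)‖ ≤ 1 := norm_exp_le_one (re_neg_mul_ofReal_nonpos hre hτ)
  have htransport : ‖1 - exp (-(lam + δ) * l / f)‖ ≤ 2 := by
    have hrewrite : -(lam + δ) * l / f = -(lam + δ) * ((l / f : ℝ) : ℂ) := by push_cast; ring
    rw [hrewrite]
    refine norm_one_sub_exp_le_two (re_neg_mul_ofReal_nonpos ?_ (div_nonneg hl.le hf.le))
    simpa using add_nonneg hre hδ
  have hsq := sq_norm_le_of_mul_eq hre hα.le hδ hdelay htransport hroot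
  have htwice : 2 * ‖lam‖ ≤ Real.sqrt (δ ^ 2 + 8 * |β|) :=
    (Real.le_sqrt (by positivity) (by positivity)).mpr (by nlinarith [sq_nonneg δ])
  linarith [abs_nonneg δ]
end

section
/- Let α, δ, l, f > 0 and define h(x) := (x+α)(x+δ)/(1 - e^{-(x+δ)l/f}) for x ≥ 0. If e^{δl/f} - 1 - (l/f)·αδ/(α+δ) ≥ 0, then h is strictly increasing on [0,∞). -/
/-!
Write `c = l / f`. By the quotient rule, `h' (x) > 0` amounts to
`c (x+α)(x+δ) < (2x+α+δ)(e^{c(x+δ)} - 1)`. For `x > 0` this follows from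
`(x+α)(x+δ) ≤ (2x+α+δ)(x + αδ/(α+δ))`, the hypothesis `cαδ/(α+δ) ≤ e^{cδ} - 1`, and
`cx + e^{cδ} < e^{cx + cδ}`.
-/

open Real Set

theorem add_exp_lt_exp_add {a b : ℝ} (ha : 0 < a) (hb : 0 ≤ b) : a + exp b < exp (a + b) := by
  rw [exp_add]
  nlinarith [add_one_lt_exp ha.ne', one_le_exp hb]

theorem add_mul_add_le_two_mul_add_add_mul {α δ x : ℝ} (hα : 0 < α) (hδ : 0 < δ) (hx : 0 ≤ x) :
    (x + α) * (x + δ) ≤ (2 * x + α + δ) * (x + α * δ / (α + δ)) := by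
  have hαδ : 0 < α + δ := by linarith
  have hdiff : (2 * x + α + δ) * (x + α * δ / (α + δ)) - (x + α) * (x + δ)
      = x * (x * (α + δ) + 2 * α * δ) / (α + δ) := by
    field_simp
    ring
  have hdiff_nonneg : 0 ≤ x * (x * (α + δ) + 2 * α * δ) / (α + δ) := by positivity
  linarith

section

variable {α δ c : ℝ}

theorem one_sub_exp_neg_mul_pos (hδ : 0 < δ) (hc : 0 < c) {x : ℝ} (hx : 0 ≤ x) :
    0 < 1 - exp (-(c * (x + δ))) :=
  sub_pos.mpr (exp_lt_one_iff.mpr (neg_lt_zero.mpr (by positivity)))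

theorem mul_add_mul_add_lt_mul_exp_sub_one (hα : 0 < α) (hδ : 0 < δ) (hc : 0 < c)
    (hcond : c * (α * δ) / (α + δ) ≤ exp (c * δ) - 1) {x : ℝ} (hx : 0 < x) :
    c * ((x + α) * (x + δ)) < (2 * x + α + δ) * (exp (c * (x + δ)) - 1) := by
  have hexp : c * x + c * (α * δ) / (α + δ) < exp (c * (x + δ)) - 1 := by
    rw [mul_add]
    linarith [add_exp_lt_exp_add (mul_pos hc hx) (mul_pos hc hδ).le]
  calc c * ((x + α) * (x + δ))
      ≤ c * ((2 * x + α + δ) * (x + α * δ / (α + δ))) :=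
        mul_le_mul_of_nonneg_left (add_mul_add_le_two_mul_add_add_mul hα hδ hx.le) hc.le
    _ = (2 * x + α + δ) * (c * x + c * (α * δ) / (α + δ)) := by ring
    _ < (2 * x + α + δ) * (exp (c * (x + δ)) - 1) :=
        mul_lt_mul_of_pos_left hexp (by linarith)

theorem hasDerivAt_mul_div_one_sub_exp_neg {x : ℝ} (hD : 1 - exp (-(c * (x + δ))) ≠ 0) :
    HasDerivAt (fun y => (y + α) * (y + δ) / (1 - exp (-(c * (y + δ)))))
      (((2 * x + α + δ) * (1 - exp (-(c * (x + δ))))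
          - (x + α) * (x + δ) * (c * exp (-(c * (x + δ)))))
        / (1 - exp (-(c * (x + δ)))) ^ 2) x := by
  have hN : HasDerivAt (fun y => (y + α) * (y + δ)) (2 * x + α + δ) x :=
    (((hasDerivAt_id' x).add_const α).mul ((hasDerivAt_id' x).add_const δ)).congr_deriv
      (by ring)
  have hD' : HasDerivAt (fun y => 1 - exp (-(c * (y + δ)))) (c * exp (-(c * (x + δ)))) x :=
    ((((hasDerivAt_id' x).add_const δ).const_mul c).neg.exp.const_sub 1).congr_deriv
      (by simp only [Pi.neg_apply]; ring)
  exact hN.div hD' hD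

theorem strictMonoOn_mul_div_one_sub_exp_neg (hα : 0 < α) (hδ : 0 < δ) (hc : 0 < c)
    (hcond : c * (α * δ) / (α + δ) ≤ exp (c * δ) - 1) :
    StrictMonoOn (fun x => (x + α) * (x + δ) / (1 - exp (-(c * (x + δ))))) (Ici 0) := by
  apply strictMonoOn_of_deriv_pos (convex_Ici 0)
  · exact ContinuousOn.div (by fun_prop) (by fun_prop)
      fun x hx => (one_sub_exp_neg_mul_pos hδ hc hx).ne'
  · intro x hx
    rw [interior_Ici, mem_Ioi] at hx
    have hD := one_sub_exp_neg_mul_pos hδ hc hx.le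
    rw [(hasDerivAt_mul_div_one_sub_exp_neg hD.ne').deriv]
    refine div_pos ?_ (by positivity)
    have hG := mul_add_mul_add_lt_mul_exp_sub_one hα hδ hc hcond hx
    have hEE : exp (-(c * (x + δ))) * exp (c * (x + δ)) = 1 := by
      rw [← exp_add, neg_add_cancel, exp_zero]
    have hnum : (2 * x + α + δ) * (1 - exp (-(c * (x + δ))))
          - (x + α) * (x + δ) * (c * exp (-(c * (x + δ))))
        = exp (-(c * (x + δ)))
          * ((2 * x + α + δ) * (exp (c * (x + δ)) - 1) - c * ((x + α) * (x + δ))) := by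
      linear_combination -(2 * x + α + δ) * hEE
    rw [hnum]
    exact mul_pos (exp_pos _) (sub_pos.mpr hG)

end

/-- if `e^{δl/f} - 1 - (l/f)αδ/(α+δ) ≥ 0` then
`h(x) = (x+α)(x+δ)/(1 - e^{-(x+δ)l/f})` is strictly increasing on `[0,∞)`. -/
theorem h_strictMono (α δ l f : ℝ)
    (hα : 0 < α) (hδ : 0 < δ) (hl : 0 < l) (hf : 0 < f)
    (hcond : 0 ≤ Real.exp (δ * l / f) - 1 - (l / f) * (α * δ) / (α + δ))
    (h : ℝ → ℝ)
    (hh : h = fun x => (x + α) * (x + δ) / (1 - Real.exp (-(x + δ) * l / f))) :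
    StrictMonoOn h (Set.Ici 0) := by
  have hcond' : l / f * (α * δ) / (α + δ) ≤ exp (l / f * δ) - 1 := by
    rw [show l / f * δ = δ * l / f by ring]
    linarith
  have hh' : h = fun x => (x + α) * (x + δ) / (1 - exp (-(l / f * (x + δ)))) := by
    rw [hh]
    funext x
    rw [show -(x + δ) * l / f = -(l / f * (x + δ)) by ring]
  rw [hh']
  exact strictMonoOn_mul_div_one_sub_exp_neg hα hδ (div_pos hl hf) hcond'
end

section
/- Let α, δ, l, f > 0 with e^{δl/f} - 1 - (l/f)·αδ/(α+δ) ≥ 0, β > β₀ := αδ/(1 - e^{-δl/f}), and let x_β > 0 be the unique point with h(x_β) = β where h(x) := (x+α)(x+δ)/(1 - e^{-(x+δ)l/f}). Define τ(x) := -ln(h(x)/β)/x for x ∈ (0, x_β]. Then τ is continuous, τ(x_β) = 0, τ is nonincreasing, and τ(x) → +∞ as x → 0⁺. Consequently the range of τ on (0, x_β] is all of [0, ∞). -/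
open Set Filter

lemma den_pos' (l f : ℝ) (hl : 0 < l) (hf : 0 < f) {u : ℝ} (hu : 0 < u) :
    0 < 1 - Real.exp (-u * l / f) := by
  have h1 : -u * l / f < 0 := div_neg_of_neg_of_pos (by nlinarith) hf
  have := Real.exp_lt_one_iff.mpr h1
  linarith

lemma h_pos' (α δ l f : ℝ) (hα : 0 < α) (hδ : 0 < δ) (hl : 0 < l) (hf : 0 < f)
    {x : ℝ} (hx : 0 ≤ x) :
    0 < (x + α) * (x + δ) / (1 - Real.exp (-(x + δ) * l / f)) := by
  apply div_pos (by nlinarith) (den_pos' l f hl hf (by linarith))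

lemma h_contOn' (α δ l f : ℝ) (hδ : 0 < δ) (hl : 0 < l) (hf : 0 < f) :
    ContinuousOn (fun x => (x + α) * (x + δ) / (1 - Real.exp (-(x + δ) * l / f)))
      (Set.Ici 0) := by
  apply ContinuousOn.div
  · fun_prop
  · fun_prop
  · intro x hx
    exact ne_of_gt (den_pos' l f hl hf (by simp at hx; linarith))

lemma h_hasDerivAt' (α δ l f : ℝ) (hl : 0 < l) (hf : 0 < f) {x : ℝ} (hx : 0 < x + δ) :
    HasDerivAt (fun x => (x + α) * (x + δ) / (1 - Real.exp (-(x + δ) * l / f)))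
      (((1 * (x + δ) + (x + α) * 1) * (1 - Real.exp (-(x + δ) * l / f)) -
        (x + α) * (x + δ) * (0 - Real.exp (-(x + δ) * l / f) * (-1 * l / f))) /
        (1 - Real.exp (-(x + δ) * l / f)) ^ 2) x := by
  have hden : 1 - Real.exp (-(x + δ) * l / f) ≠ 0 :=
    ne_of_gt (den_pos' l f hl hf hx)
  have hN : HasDerivAt (fun x : ℝ => (x + α) * (x + δ)) (1 * (x + δ) + (x + α) * 1) x :=
    ((hasDerivAt_id x).add_const α).mul ((hasDerivAt_id x).add_const δ)
  have hinner : HasDerivAt (fun x : ℝ => -(x + δ) * l / f) (-1 * l / f) x := by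
    simpa using (((hasDerivAt_id x).add_const δ).neg.mul_const l).div_const f
  have hexp : HasDerivAt (fun x : ℝ => Real.exp (-(x + δ) * l / f))
      (Real.exp (-(x + δ) * l / f) * (-1 * l / f)) x := hinner.exp
  have hD : HasDerivAt (fun x : ℝ => 1 - Real.exp (-(x + δ) * l / f))
      (0 - Real.exp (-(x + δ) * l / f) * (-1 * l / f)) x :=
    (hasDerivAt_const x 1).sub hexp
  exact hN.div hD hden

lemma h_strictMonoOn' (α δ l f : ℝ) (hα : 0 < α) (hδ : 0 < δ) (hl : 0 < l) (hf : 0 < f) :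
    StrictMonoOn (fun x => (x + α) * (x + δ) / (1 - Real.exp (-(x + δ) * l / f)))
      (Set.Ici 0) := by
  apply strictMonoOn_of_deriv_pos (convex_Ici 0) (h_contOn' α δ l f hδ hl hf)
  intro x hx
  rw [interior_Ici] at hx
  have hxδ : 0 < x + δ := by have := hx.out; linarith
  rw [(h_hasDerivAt' α δ l f hl hf hxδ).deriv]
  set r := l / f with hr
  have hrpos : 0 < r := div_pos hl hf
  set E := Real.exp (-(x + δ) * l / f) with hE
  have hEpos : 0 < E := Real.exp_pos _
  have hE1 : 0 < 1 - E := den_pos' l f hl hf hxδ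
  have hexp : (x + δ) * r + 1 < Real.exp ((x + δ) * r) :=
    Real.add_one_lt_exp (by positivity)
  have hmul : Real.exp ((x + δ) * r) * E = 1 := by
    rw [hE, ← Real.exp_add, show (x + δ) * r + -(x + δ) * l / f = 0 by rw [hr]; ring,
      Real.exp_zero]
  have hkey : ((x + δ) * r + 1) * E < 1 := by nlinarith
  apply div_pos _ (pow_pos hE1 2)
  have hx0 : 0 < x := hx.out
  rw [show (0 - E * (-1 * l / f)) = E * r by rw [hr]; ring]
  have key2 : 0 < (2 * x + α + δ) * (1 - ((x + δ) * r + 1) * E) :=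
    mul_pos (by linarith) (by linarith)
  have slack : (x + α) * ((x + δ) * (E * r)) ≤ (2 * x + α + δ) * ((x + δ) * (E * r)) :=
    mul_le_mul_of_nonneg_right (by linarith) (by positivity)
  nlinarith [key2, slack]

/-- properties of the delay function `τ(x) = -ln(h(x)/β)/x` on
`(0, x_β]`: continuity, `τ(x_β) = 0`, monotonicity, blow-up at `0⁺`, and
surjectivity onto `[0,∞)`. -/
theorem tau_properties (α δ l f β xβ : ℝ)
    (hα : 0 < α) (hδ : 0 < δ) (hl : 0 < l) (hf : 0 < f)
    (hcond : 0 ≤ Real.exp (δ * l / f) - 1 - (l / f) * (α * δ) / (α + δ))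
    (hβ : α * δ / (1 - Real.exp (-δ * l / f)) < β)
    (h : ℝ → ℝ)
    (hh : h = fun x => (x + α) * (x + δ) / (1 - Real.exp (-(x + δ) * l / f)))
    (hxβ : 0 < xβ) (hval : h xβ = β)
    (tau : ℝ → ℝ)
    (htau : tau = fun x => -Real.log (h x / β) / x) :
    ContinuousOn tau (Set.Ioc 0 xβ) ∧
    tau xβ = 0 ∧
    AntitoneOn tau (Set.Ioc 0 xβ) ∧
    Tendsto tau (nhdsWithin 0 (Set.Ioi 0)) atTop ∧
    tau '' Set.Ioc 0 xβ = Set.Ici 0 := by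
  have hmono : StrictMonoOn h (Set.Ici 0) := by
    rw [hh]; exact h_strictMonoOn' α δ l f hα hδ hl hf
  have hhcont : ContinuousOn h (Set.Ici 0) := by
    rw [hh]; exact h_contOn' α δ l f hδ hl hf
  have hhpos : ∀ x, 0 ≤ x → 0 < h x := by
    intro x hx; rw [hh]; exact h_pos' α δ l f hα hδ hl hf hx
  have hh0 : h 0 = α * δ / (1 - Real.exp (-δ * l / f)) := by
    rw [hh]; norm_num
  have hβpos : 0 < β := lt_trans (hh0 ▸ hhpos 0 le_rfl) hβ
  have hhle : ∀ x ∈ Set.Ioc 0 xβ, h x ≤ β := by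
    intro x hx
    rw [← hval]
    exact hmono.monotoneOn hx.1.le (le_of_lt hxβ) hx.2
  have htaupos : ∀ x ∈ Set.Ioc 0 xβ, 0 ≤ tau x := by
    intro x hx
    rw [htau]
    apply div_nonneg _ hx.1.le
    rw [neg_nonneg]
    exact Real.log_nonpos (div_pos (hhpos x hx.1.le) hβpos).le
      ((div_le_one hβpos).mpr (hhle x hx))
  refine ⟨?_, ?_, ?_, ?_, ?_⟩
  · -- continuity
    rw [htau]
    apply ContinuousOn.div _ continuousOn_id (fun x hx => ne_of_gt hx.1)
    apply ContinuousOn.neg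
    apply ContinuousOn.log
    · exact (hhcont.mono (fun x hx => hx.1.le)).div_const β
    · intro x hx
      exact ne_of_gt (div_pos (hhpos x hx.1.le) hβpos)
  · rw [htau]
    simp [hval, div_self (ne_of_gt hβpos)]
  · -- antitone
    intro x hx y hy hxy
    rw [htau]
    simp only
    apply div_le_div₀ (by
        rw [neg_nonneg]
        exact Real.log_nonpos (div_pos (hhpos x hx.1.le) hβpos).le
          ((div_le_one hβpos).mpr (hhle x hx)))
      _ hx.1 hxy
    rw [neg_le_neg_iff]
    apply Real.log_le_log (div_pos (hhpos x hx.1.le) hβpos)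
    exact (div_le_div_iff_of_pos_right hβpos).mpr (hmono.monotoneOn hx.1.le hy.1.le hxy)
  · -- tendsto atTop
    have hLpos : 0 < -Real.log (h 0 / β) := by
      rw [neg_pos]
      apply Real.log_neg (div_pos (hhpos 0 le_rfl) hβpos)
      rw [div_lt_one hβpos, hh0]
      exact hβ
    have hcont0 : Tendsto (fun x => -Real.log (h x / β)) (nhdsWithin 0 (Set.Ioi 0))
        (nhds (-Real.log (h 0 / β))) := by
      apply Filter.Tendsto.neg
      apply ContinuousWithinAt.tendsto
      apply ContinuousWithinAt.log
      · exact ((hhcont 0 Set.self_mem_Ici).mono Set.Ioi_subset_Ici_self).div_const β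
      · exact ne_of_gt (div_pos (hhpos 0 le_rfl) hβpos)
    have hinv : Tendsto (fun x : ℝ => x⁻¹) (nhdsWithin 0 (Set.Ioi 0)) atTop :=
      tendsto_inv_nhdsGT_zero
    have := hcont0.pos_mul_atTop hLpos hinv
    rw [htau]
    refine this.congr (fun x => ?_)
    exact (div_eq_mul_inv _ _).symm
  · -- image
    apply Set.Subset.antisymm
    · rintro y ⟨x, hx, rfl⟩
      exact htaupos x hx
    · intro t ht
      have ht0 : (0 : ℝ) ≤ t := ht
      -- find x₀ ∈ Ioo 0 xβ with t ≤ tau x₀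
      have hev1 : ∀ᶠ x in nhdsWithin 0 (Set.Ioi 0), t ≤ tau x := by
        have : Tendsto tau (nhdsWithin 0 (Set.Ioi 0)) atTop := by
          have hLpos : 0 < -Real.log (h 0 / β) := by
            rw [neg_pos]
            apply Real.log_neg (div_pos (hhpos 0 le_rfl) hβpos)
            rw [div_lt_one hβpos, hh0]
            exact hβ
          have hcont0 : Tendsto (fun x => -Real.log (h x / β)) (nhdsWithin 0 (Set.Ioi 0))
              (nhds (-Real.log (h 0 / β))) := by
            apply Filter.Tendsto.neg
            apply ContinuousWithinAt.tendsto
            apply ContinuousWithinAt.log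
            · exact ((hhcont 0 Set.self_mem_Ici).mono Set.Ioi_subset_Ici_self).div_const β
            · exact ne_of_gt (div_pos (hhpos 0 le_rfl) hβpos)
          have := hcont0.pos_mul_atTop hLpos tendsto_inv_nhdsGT_zero
          rw [htau]
          refine this.congr (fun x => ?_)
          exact (div_eq_mul_inv _ _).symm
        exact this.eventually_ge_atTop t
      have hev2 : ∀ᶠ x in nhdsWithin 0 (Set.Ioi 0), x ∈ Set.Ioo 0 xβ :=
        Filter.eventually_of_mem (Ioo_mem_nhdsGT_of_mem ⟨le_refl 0, hxβ⟩) (fun x hx => hx)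
      obtain ⟨x₀, hx₀t, hx₀⟩ := (hev1.and hev2).exists
      -- IVT on [x₀, xβ]
      have hsub : Set.Icc x₀ xβ ⊆ Set.Ioc 0 xβ := fun z hz =>
        ⟨lt_of_lt_of_le hx₀.1 hz.1, hz.2⟩
      have hcont' : ContinuousOn tau (Set.Icc x₀ xβ) := by
        rw [htau]
        apply ContinuousOn.div _ continuousOn_id
          (fun x hx => ne_of_gt (hsub hx).1)
        apply ContinuousOn.neg
        apply ContinuousOn.log
        · exact (hhcont.mono (fun x hx => (hsub hx).1.le)).div_const β
        · intro x hx
          exact ne_of_gt (div_pos (hhpos x (hsub hx).1.le) hβpos)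
      have htauxβ : tau xβ = 0 := by
        rw [htau]; simp [hval, div_self (ne_of_gt hβpos)]
      have : t ∈ Set.Icc (tau xβ) (tau x₀) := by
        rw [htauxβ]
        exact ⟨ht0, hx₀t⟩
      obtain ⟨x, hxmem, hxval⟩ := intermediate_value_Icc' hx₀.2.le hcont' this
      exact ⟨x, hsub hxmem, hxval⟩
end

section
/- Let α, δ, l, f > 0 with e^{δl/f} - 1 - (l/f)·αδ/(α+δ) ≥ 0 and β > αδ/(1 - e^{-δl/f}). Then for every τ ≥ 0 there exists a real x > 0 such that (x+α)(x+δ) = β e^{-xτ}(1 - e^{-(x+δ)l/f}); i.e., the characteristic function G has a positive real root, so the system has an eigenvalue with positive real part. -/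
/-!
Put `g x = (x + α)(x + δ) - β e^{-xτ}(1 - e^{-(x+δ)l/f})`. The hypothesis on `β` says exactly
that `g 0 < 0`, while for `x ≥ 0` the subtracted term lies in `[0, β]`, so `g` grows like `x²`.
The intermediate value theorem gives a zero of `g` in `(0, ∞)`.
-/

open Real Filter

theorem exists_pos_eq_of_lt_of_tendsto_sub {p q : ℝ → ℝ} (hp : Continuous p) (hq : Continuous q)
    (h0 : p 0 < q 0) (hlim : Tendsto (fun x ↦ p x - q x) atTop atTop) :
    ∃ x, 0 < x ∧ p x = q x := by
  obtain ⟨X, hgX, hX⟩ := ((hlim.eventually_gt_atTop 0).and (eventually_gt_atTop 0)).exists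
  obtain ⟨x, ⟨hx, -⟩, hgx⟩ : (0 : ℝ) ∈ (fun x ↦ p x - q x) '' Set.Ioo 0 X :=
    intermediate_value_Ioo hX.le (by fun_prop) ⟨by simpa using h0, hgX⟩
  exact ⟨x, hx, sub_eq_zero.1 hgx⟩

theorem tendsto_sub_atTop_of_eventually_le {p q : ℝ → ℝ} {B : ℝ} (hp : Tendsto p atTop atTop)
    (hq : ∀ᶠ x in atTop, q x ≤ B) : Tendsto (fun x ↦ p x - q x) atTop atTop := by
  refine tendsto_atTop_mono' _ ?_ (tendsto_atTop_add_const_right _ (-B) hp)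
  filter_upwards [hq] with x hx
  linarith

theorem tendsto_mul_add_add_atTop {α δ : ℝ} :
    Tendsto (fun x ↦ (x + α) * (x + δ)) atTop atTop :=
  (tendsto_atTop_add_const_right _ α tendsto_id).atTop_mul_atTop₀
    (tendsto_atTop_add_const_right _ δ tendsto_id)

theorem one_sub_exp_neg_pos {t : ℝ} (ht : 0 < t) : 0 < 1 - exp (-t) := by
  simpa using exp_lt_one_iff.2 (neg_lt_zero.2 ht)

theorem mul_exp_neg_mul_one_sub_exp_neg_le {β s t : ℝ} (hβ : 0 ≤ β) (hs : 0 ≤ s) (ht : 0 ≤ t) :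
    β * exp (-s) * (1 - exp (-t)) ≤ β := by
  have hes : exp (-s) ≤ 1 := exp_le_one_iff.2 (neg_nonpos.2 hs)
  have het : exp (-t) ≤ 1 := exp_le_one_iff.2 (neg_nonpos.2 ht)
  calc β * exp (-s) * (1 - exp (-t)) ≤ β * 1 * 1 := by
        gcongr
        linarith [exp_pos (-t)]
    _ = β := by ring

theorem exists_positive_real_root_general (α δ l f β : ℝ)
    (hα : 0 < α) (hδ : 0 < δ) (hl : 0 < l) (hf : 0 < f)
    (hβ : α * δ / (1 - Real.exp (-δ * l / f)) < β) :
    ∀ τ : ℝ, 0 ≤ τ → ∃ x : ℝ, 0 < x ∧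
      (x + α) * (x + δ) = β * Real.exp (-x * τ) * (1 - Real.exp (-(x + δ) * l / f)) := by
  intro τ hτ
  have hden : 0 < 1 - exp (-δ * l / f) := by
    rw [neg_mul, neg_div]
    exact one_sub_exp_neg_pos (by positivity)
  have h0 : α * δ < β * (1 - exp (-δ * l / f)) := (div_lt_iff₀ hden).1 hβ
  have hβ0 : 0 ≤ β := le_of_lt (lt_trans (by positivity) hβ)
  have hbound : ∀ᶠ x in atTop, β * exp (-x * τ) * (1 - exp (-(x + δ) * l / f)) ≤ β := by
    filter_upwards [eventually_ge_atTop 0] with x hx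
    rw [neg_mul, neg_mul, neg_div]
    exact mul_exp_neg_mul_one_sub_exp_neg_le hβ0 (by positivity) (by positivity)
  exact exists_pos_eq_of_lt_of_tendsto_sub (by fun_prop) (by fun_prop) (by simpa using h0)
    (tendsto_sub_atTop_of_eventually_le tendsto_mul_add_add_atTop hbound)

/-- under the hypotheses, for every delay `τ ≥ 0` the
characteristic function has a positive real root `x`. -/
theorem exists_positive_real_root (α δ l f β : ℝ)
    (hα : 0 < α) (hδ : 0 < δ) (hl : 0 < l) (hf : 0 < f)
    (hcond : 0 ≤ Real.exp (δ * l / f) - 1 - (l / f) * (α * δ) / (α + δ))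
    (hβ : α * δ / (1 - Real.exp (-δ * l / f)) < β) :
    ∀ τ : ℝ, 0 ≤ τ → ∃ x : ℝ, 0 < x ∧
      (x + α) * (x + δ) = β * Real.exp (-x * τ) * (1 - Real.exp (-(x + δ) * l / f)) :=
  exists_positive_real_root_general α δ l f β hα hδ hl hf hβ
end

section
/- For β ≠ 0, a complex number λ ≠ -α, λ ≠ -δ is an eigenvalue of the delay-system generator A (i.e., the system λc + fc' - βa + δc = 0 with c(0)=0, (λ+α)a = z(1), λz + z'/τ = 0 with z(0) = c(l) has a nontrivial solution) if and only if (λ+α)(λ+δ) = β e^{-λτ}(1 - e^{-(λ+δ)l/f}). -/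
lemma hasDerivAt_exp_const_mul (k : ℂ) (x : ℝ) :
    HasDerivAt (fun t : ℝ => Complex.exp (k * t)) (k * Complex.exp (k * x)) x := by
  have h1 : HasDerivAt (fun t : ℝ => (t : ℂ)) 1 x := Complex.ofRealCLM.hasDerivAt
  have h2 := (h1.const_mul k).cexp
  simpa [mul_comm] using h2

/-- homogeneous linear ODE on an interval -/
lemma ode_solve0 (u : ℝ → ℂ) (hu : Differentiable ℝ u) (k : ℂ) (L : ℝ)
    (h : ∀ t ∈ Set.Icc (0:ℝ) L, deriv u t = -k * u t) :
    ∀ x ∈ Set.Icc (0:ℝ) L, u x = u 0 * Complex.exp (-k * x) := by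
  intro x hx
  set w : ℝ → ℂ := fun t => u t * Complex.exp (k * t) with hw
  have hwc : ContinuousOn w (Set.Icc 0 x) := by
    apply Continuous.continuousOn
    exact hu.continuous.mul (Complex.continuous_exp.comp (by continuity))
  have hderiv : ∀ t ∈ Set.Ico (0:ℝ) x, HasDerivWithinAt w 0 (Set.Ici t) t := by
    intro t ht
    have htIcc : t ∈ Set.Icc (0:ℝ) L := ⟨ht.1, le_trans ht.2.le hx.2⟩
    have h1 : HasDerivAt w (deriv u t * Complex.exp (k * t) + u t * (k * Complex.exp (k * t))) t :=
      ((hu t).hasDerivAt).mul (hasDerivAt_exp_const_mul k t)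
    have h2 : deriv u t * Complex.exp (k * t) + u t * (k * Complex.exp (k * t)) = 0 := by
      rw [h t htIcc]; ring
    rw [h2] at h1
    exact h1.hasDerivWithinAt
  have := constant_of_has_deriv_right_zero hwc hderiv x (Set.right_mem_Icc.2 hx.1)
  have hne : Complex.exp (k * x) ≠ 0 := Complex.exp_ne_zero _
  have hw0 : w 0 = u 0 := by simp [hw]
  rw [hw0] at this
  have : u x * Complex.exp (k * x) = u 0 := this
  rw [neg_mul, Complex.exp_neg]
  field_simp
  linear_combination this

/-- inhomogeneous linear ODE on an interval -/
lemma ode_solve (u : ℝ → ℂ) (hu : Differentiable ℝ u) (k m : ℂ) (L : ℝ) (hk : k ≠ 0)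
    (h : ∀ t ∈ Set.Icc (0:ℝ) L, deriv u t = -k * u t + m) :
    ∀ x ∈ Set.Icc (0:ℝ) L, u x = (u 0 - m / k) * Complex.exp (-k * x) + m / k := by
  intro x hx
  have hv : Differentiable ℝ (fun t => u t - m / k) := hu.sub_const _
  have hderiv : ∀ t ∈ Set.Icc (0:ℝ) L, deriv (fun t => u t - m / k) t = -k * (u t - m / k) := by
    intro t ht
    rw [deriv_sub_const, h t ht]
    field_simp
    ring
  have := ode_solve0 _ hv k L hderiv x hx
  linear_combination this

/-- for `β ≠ 0`, `λ ∉ {-α, -δ}` is an eigenvalue of the delay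
system generator iff `(λ+α)(λ+δ) = β e^{-λτ}(1 - e^{-(λ+δ)l/f})`. -/
theorem spectrum_characterization (α β δ l f τ : ℝ)
    (hα : 0 < α) (hβ : β ≠ 0) (hl : 0 < l) (hf : 0 < f) (hτ : 0 < τ)
    (lam : ℂ) (hlam1 : lam ≠ -α) (hlam2 : lam ≠ -(δ : ℂ)) :
    (∃ (c z : ℝ → ℂ) (a : ℂ),
      Differentiable ℝ c ∧ Differentiable ℝ z ∧
      (∀ x ∈ Set.Icc (0 : ℝ) l,
        lam * c x + f * deriv c x - β * a + δ * c x = 0) ∧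
      c 0 = 0 ∧
      (∀ ρ ∈ Set.Icc (0 : ℝ) 1, lam * z ρ + (1 / τ : ℂ) * deriv z ρ = 0) ∧
      z 0 = c l ∧
      (lam + α) * a = z 1 ∧
      (a ≠ 0 ∨ (∃ x ∈ Set.Icc (0 : ℝ) l, c x ≠ 0) ∨
        ∃ ρ ∈ Set.Icc (0 : ℝ) 1, z ρ ≠ 0)) ↔
    (lam + α) * (lam + δ) =
      (β : ℂ) * Complex.exp (-lam * τ) * (1 - Complex.exp (-(lam + δ) * l / f)) := by
  have hfne : (f:ℂ) ≠ 0 := by exact_mod_cast hf.ne'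
  have hτne : (τ:ℂ) ≠ 0 := by exact_mod_cast hτ.ne'
  have hβne : (β:ℂ) ≠ 0 := by exact_mod_cast hβ
  have hld : lam + δ ≠ 0 := fun h => hlam2 (eq_neg_of_add_eq_zero_left h)
  have hla : lam + α ≠ 0 := fun h => hlam1 (eq_neg_of_add_eq_zero_left h)
  constructor
  · rintro ⟨c, z, a, hcd, hzd, hc, hc0, hz, hzc, ha, hnt⟩
    set k := (lam + δ)/f with hk
    have hkne : k ≠ 0 := div_ne_zero hld hfne
    have hcderiv : ∀ x ∈ Set.Icc (0:ℝ) l, deriv c x = -k * c x + β * a / f := by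
      intro x hx
      have h1 := hc x hx
      rw [hk]
      field_simp
      linear_combination h1
    have hcf : ∀ x ∈ Set.Icc (0:ℝ) l,
        c x = β * a / (lam + δ) * (1 - Complex.exp (-k * x)) := by
      intro x hx
      have h1 := ode_solve c hcd k (β * a / f) l hkne hcderiv x hx
      rw [hc0] at h1
      have h2 : (β * a / f) / k = β * a / (lam + δ) := by
        rw [hk]; field_simp
      rw [h1, h2]; ring
    have hzderiv : ∀ t ∈ Set.Icc (0:ℝ) 1, deriv z t = -(lam * τ) * z t := by
      intro t ht
      have h1 := hz t ht
      field_simp at h1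
      linear_combination h1
    have hzf := ode_solve0 z hzd (lam * τ) 1 hzderiv
    have he : Complex.exp (-(lam * τ) * ((1:ℝ):ℂ)) = Complex.exp (-lam * τ) := by
      congr 1; push_cast; ring
    have hE : Complex.exp (-k * (l:ℂ)) = Complex.exp (-(lam + δ) * l / f) := by
      rw [hk]; congr 1; ring
    have hz1 : z 1 = c l * Complex.exp (-lam * τ) := by
      have h1 := hzf 1 ⟨zero_le_one, le_refl 1⟩
      rw [hzc, he] at h1
      exact h1
    have hcl : c l = β * a / (lam + δ) * (1 - Complex.exp (-(lam + δ) * l / f)) := by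
      have h1 := hcf l ⟨hl.le, le_refl l⟩
      rw [hE] at h1
      exact h1
    by_cases ha0 : a = 0
    · exfalso
      have hc0' : ∀ x ∈ Set.Icc (0:ℝ) l, c x = 0 := by
        intro x hx; rw [hcf x hx, ha0]; ring
      have hz0' : ∀ t ∈ Set.Icc (0:ℝ) 1, z t = 0 := by
        intro t ht
        rw [hzf t ht, hzc, hc0' l ⟨hl.le, le_refl l⟩]; ring
      rcases hnt with h | ⟨x, hx, hcx⟩ | ⟨ρ, hρ, hzρ⟩
      · exact h ha0
      · exact hcx (hc0' x hx)
      · exact hzρ (hz0' ρ hρ)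
    · have key : (lam + α) * a =
          β * a / (lam + δ) * (1 - Complex.exp (-(lam + δ) * l / f)) *
            Complex.exp (-lam * τ) := by
        rw [ha, hz1, hcl]
      rw [div_mul_eq_mul_div, div_mul_eq_mul_div, eq_div_iff hld] at key
      refine mul_left_cancel₀ ha0 ?_
      linear_combination key
  · intro h
    set k : ℂ := -(lam + δ)/f with hk
    set c : ℝ → ℂ := fun x => β / (lam + δ) * (1 - Complex.exp (k * x)) with hcdef
    set z : ℝ → ℂ := fun ρ => c l * Complex.exp (-(lam * τ) * ρ) with hzdef
    have hcD : ∀ x : ℝ, HasDerivAt c (β / (lam + δ) * -(k * Complex.exp (k * x))) x := by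
      intro x
      exact ((hasDerivAt_exp_const_mul k x).const_sub 1).const_mul _
    have hzD : ∀ ρ : ℝ, HasDerivAt z (c l * (-(lam * τ) * Complex.exp (-(lam * τ) * ρ))) ρ := by
      intro ρ
      exact (hasDerivAt_exp_const_mul (-(lam * τ)) ρ).const_mul _
    refine ⟨c, z, 1, fun x => (hcD x).differentiableAt, fun ρ => (hzD ρ).differentiableAt,
      ?_, ?_, ?_, ?_, ?_, Or.inl one_ne_zero⟩
    · intro x hx
      rw [(hcD x).deriv, hcdef]
      simp only
      rw [hk]
      field_simp
      ring
    · simp [hcdef]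
    · intro ρ hρ
      rw [(hzD ρ).deriv, hzdef]
      simp only
      field_simp
      ring
    · simp [hzdef]
    · have h2 : k * (l:ℂ) = -(lam + δ) * l / f := by rw [hk]; ring
      have h3 : z 1 = c l * Complex.exp (-lam * τ) := by
        rw [hzdef]; simp only; norm_num
      have hE : Complex.exp (k * (l:ℂ)) = Complex.exp (-(lam + δ) * l / f) := by
        rw [hk]; congr 1 <;> ring
      rw [h3]
      show (lam + (α:ℂ)) * 1 = (β:ℂ) / (lam + δ) * (1 - Complex.exp (k * l)) * Complex.exp (-lam * τ)
      rw [hE, mul_one, div_mul_eq_mul_div, div_mul_eq_mul_div, eq_div_iff hld]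
      linear_combination h
end

section
/- Let P := {(α,β,δ,l,f,τ) ∈ ℝ⁶ : α,β,l > 0, τ ≥ 0}, and for X ∈ P let G_X(λ) be the characteristic function G_X(λ) = 1 - β e^{-λτ}(1 - e^{-(λ+δ)l/f})/((λ+α)(λ+δ)). The set R₊ := {X ∈ P : ∃ λ with Re λ > 0 and G_X(λ) = 0} is open in P. -/
open Complex

/-- Parameter space point: `X = (α, β, δ, l, f, τ)`. -/
abbrev Param : Type := ℝ × ℝ × ℝ × ℝ × ℝ × ℝ

/-- Characteristic function `G_X(λ)` of the delay system with parameters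
`X = (α, β, δ, l, f, τ)`. -/
noncomputable def charFun (X : Param) (lam : ℂ) : ℂ :=
  1 - (X.2.1 : ℂ) * Complex.exp (-lam * X.2.2.2.2.2) *
    (1 - Complex.exp (-(lam + X.2.2.1) * X.2.2.2.1 / X.2.2.2.2.1)) /
    ((lam + X.1) * (lam + X.2.2.1))

/-- Admissible parameter set `P`: `α, β, l > 0` and `τ ≥ 0`. -/
def paramSet : Set Param :=
  {X | 0 < X.1 ∧ 0 < X.2.1 ∧ 0 < X.2.2.2.1 ∧ 0 ≤ X.2.2.2.2.2}

/-!
For fixed parameters, `G_X` is holomorphic away from the poles `-α, -δ`, and jointly continuous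
in `(X, λ)` there. A root `λ₀` with `Re λ₀ > 0` is isolated, because `G_X ≡ 0` near `λ₀` would
force the entire functions `β e^{-λτ}(1 - e^{-(λ+δ)l/f})` and `(λ+α)(λ+δ)` to agree, which fails
on the imaginary axis where the first is bounded and the second grows like `|λ|²`. On a small
circle around `λ₀` we then have `|G_{X₀}| ≥ m > 0`, and for `X` near `X₀` uniformly
`|G_X - G_{X₀}| < m/2` on the closed disc; so `|G_X(λ₀)| < m/2 ≤ |G_X|` on the circle, and the
minimum modulus principle yields a root of `G_X` inside the disc.
-/

open Metric Set Filter Topology Function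

theorem exists_mem_ball_eq_zero_of_norm_lt {E : Type*} [NormedAddCommGroup E] [NormedSpace ℂ E]
    [Nontrivial E] {f : E → ℂ} {c : E} {r m : ℝ} (hr : 0 < r) (hf : DiffContOnCl ℂ f (ball c r))
    (hc : ‖f c‖ < m) (hsphere : ∀ z ∈ sphere c r, m ≤ ‖f z‖) : ∃ z ∈ ball c r, f z = 0 := by
  by_contra! hne
  have hm : 0 < m := (norm_nonneg _).trans_lt hc
  have hne_closure : ∀ z ∈ closure (ball c r), f z ≠ 0 := by
    intro z hz
    rcases (mem_closedBall.mp (closure_ball_subset_closedBall hz)).eq_or_lt with hz | hz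
    · exact norm_pos_iff.mp (hm.trans_le (hsphere z hz))
    · exact hne z hz
  -- maximum modulus principle for `1 / f`
  have hinv : ‖(f c)⁻¹‖ ≤ m⁻¹ :=
    Complex.norm_le_of_forall_mem_frontier_norm_le isBounded_ball (hf.inv hne_closure)
      (fun z hz => by
        rw [Pi.inv_apply, norm_inv]
        exact inv_anti₀ hm (hsphere z (frontier_ball_subset_sphere hz)))
      (subset_closure (mem_ball_self hr))
  rw [norm_inv, inv_le_inv₀ (norm_pos_iff.mpr (hne c (mem_ball_self hr))) hm] at hinv
  exact hc.not_ge hinv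

theorem ContinuousOn.eventually_forall_norm_sub_lt {T Y F : Type*} [TopologicalSpace T]
    [TopologicalSpace Y] [SeminormedAddCommGroup F] {g : T × Y → F} {W : Set (T × Y)}
    (hW : IsOpen W) (hg : ContinuousOn g W) {x₀ : T} {K : Set Y} (hK : IsCompact K)
    (hKW : ∀ y ∈ K, (x₀, y) ∈ W) {δ : ℝ} (hδ : 0 < δ) :
    ∀ᶠ x in 𝓝 x₀, ∀ y ∈ K, (x, y) ∈ W ∧ ‖g (x, y) - g (x₀, y)‖ < δ := by
  refine hK.eventually_forall_of_forall_eventually fun y hy => ?_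
  have hgy : ContinuousAt g (x₀, y) := hg.continuousAt (hW.mem_nhds (hKW y hy))
  have htendsto : Tendsto (fun p : T × Y => g p - g (x₀, p.2)) (𝓝 (x₀, y)) (𝓝 0) := by
    simpa using hgy.tendsto.sub
      (hgy.comp (f := fun p : T × Y => (x₀, p.2)) (by fun_prop)).tendsto
  filter_upwards [hW.mem_nhds (hKW y hy), Metric.tendsto_nhds.mp htendsto δ hδ] with p hpW hp
  exact ⟨hpW, by simpa using hp⟩

theorem eventually_exists_mem_ball_eq_zero {T : Type*} [TopologicalSpace T] {F : T → ℂ → ℂ}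
    {W : Set (T × ℂ)} (hW : IsOpen W) (hcont : ContinuousOn (uncurry F) W)
    (hdiff : ∀ p ∈ W, DifferentiableAt ℂ (F p.1) p.2) {x₀ : T} {z₀ : ℂ} (h₀ : (x₀, z₀) ∈ W)
    (hz₀ : F x₀ z₀ = 0) (hne : ¬ ∀ᶠ z in 𝓝 z₀, F x₀ z = 0) {ε : ℝ} (hε : 0 < ε) :
    ∀ᶠ x in 𝓝 x₀, ∃ z ∈ ball z₀ ε, F x z = 0 := by
  have hslice : ∀ᶠ z in 𝓝 z₀, (x₀, z) ∈ W :=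
    (hW.preimage (Continuous.prodMk_right x₀)).mem_nhds h₀
  have hanalytic : AnalyticAt ℂ (F x₀) z₀ :=
    DifferentiableOn.analyticAt (fun z hz => (hdiff (x₀, z) hz).differentiableWithinAt) hslice
  have hisolated : ∀ᶠ z in 𝓝[≠] z₀, F x₀ z ≠ 0 :=
    hanalytic.eventually_eq_zero_or_eventually_ne_zero.resolve_left hne
  obtain ⟨ρ, hρ, hball⟩ := Metric.eventually_nhds_iff_ball.mp
    ((eventually_nhdsWithin_iff.mp hisolated).and
      (hslice.and (ball_mem_nhds z₀ hε)))
  set r := ρ / 2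
  have hr : 0 < r := half_pos hρ
  have hrρ : closedBall z₀ r ⊆ ball z₀ ρ := closedBall_subset_ball (half_lt_self hρ)
  obtain ⟨w, hw, hwmin⟩ := (isCompact_sphere z₀ r).exists_isMinOn
    (NormedSpace.sphere_nonempty.mpr hr.le)
    ((hcont.comp (Continuous.prodMk_right x₀).continuousOn fun z hz =>
      (hball z (hrρ (sphere_subset_closedBall hz))).2.1).norm)
  set m := ‖F x₀ w‖
  have hm : 0 < m := norm_pos_iff.mpr <| (hball w (hrρ (sphere_subset_closedBall hw))).1
    (ne_of_mem_sphere hw hr.ne')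
  filter_upwards [hcont.eventually_forall_norm_sub_lt hW (isCompact_closedBall z₀ r)
    (fun z hz => (hball z (hrρ hz)).2.1) (half_pos hm)] with x hx
  have hdc : DiffContOnCl ℂ (F x) (ball z₀ r) := by
    refine DifferentiableOn.diffContOnCl ?_
    rw [closure_ball z₀ hr.ne']
    exact fun z hz => (hdiff _ (hx z hz).1).differentiableWithinAt
  have hcenter : ‖F x z₀‖ < m / 2 := by
    simpa [hz₀] using (hx z₀ (mem_closedBall_self hr.le)).2
  have hcircle : ∀ z ∈ sphere z₀ r, m / 2 ≤ ‖F x z‖ := fun z hz => by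
    have hclose : ‖F x z - F x₀ z‖ < m / 2 := (hx z (sphere_subset_closedBall hz)).2
    have hmin : m ≤ ‖F x₀ z‖ := hwmin hz
    linarith [norm_le_norm_add_norm_sub (F x z) (F x₀ z)]
  obtain ⟨z, hz, hFz⟩ := exists_mem_ball_eq_zero_of_norm_lt hr hdc hcenter hcircle
  exact ⟨z, (hball z (hrρ (ball_subset_closedBall hz))).2.2, hFz⟩

noncomputable def charNum (X : Param) (z : ℂ) : ℂ :=
  X.2.1 * exp (-z * X.2.2.2.2.2) * (1 - exp (-(z + X.2.2.1) * X.2.2.2.1 / X.2.2.2.2.1))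

def charDen (X : Param) (z : ℂ) : ℂ := (z + X.1) * (z + X.2.2.1)

theorem charFun_eq_one_sub_div (X : Param) (z : ℂ) :
    charFun X z = 1 - charNum X z / charDen X z := rfl

theorem differentiable_charNum (X : Param) : Differentiable ℂ (charNum X) := by
  unfold charNum; fun_prop

theorem differentiable_charDen (X : Param) : Differentiable ℂ (charDen X) := by
  unfold charDen; fun_prop

def charFunDomain : Set (Param × ℂ) := {p | p.1.2.2.2.2.1 ≠ 0 ∧ charDen p.1 p.2 ≠ 0}

theorem isOpen_charFunDomain : IsOpen charFunDomain :=
  (isOpen_ne_fun (by fun_prop) continuous_const).inter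
    (isOpen_ne_fun (by unfold charDen; fun_prop) continuous_const)

theorem continuousOn_charFun : ContinuousOn (uncurry charFun) charFunDomain := by
  intro p hp
  apply ContinuousAt.continuousWithinAt
  have hf : (p.1.2.2.2.2.1 : ℂ) ≠ 0 := by exact_mod_cast hp.1
  have hd : charDen p.1 p.2 ≠ 0 := hp.2
  unfold charDen at hd
  simp only [uncurry_def, charFun]
  fun_prop (disch := assumption)

theorem differentiableAt_charFun {X : Param} {z : ℂ} (hz : charDen X z ≠ 0) :
    DifferentiableAt ℂ (charFun X) z := by
  unfold charDen at hz
  unfold charFun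
  fun_prop (disch := assumption)

theorem norm_charNum_I_mul_le (X : Param) (t : ℝ) :
    ‖charNum X (I * t)‖ ≤ |X.2.1| * (1 + Real.exp (-(X.2.2.1 * X.2.2.2.1) / X.2.2.2.2.1)) := by
  have hdelay : ‖exp (-(I * t) * X.2.2.2.2.2)‖ = 1 := by simp [norm_exp]
  have hdamp : ‖exp (-(I * t + X.2.2.1) * X.2.2.2.1 / X.2.2.2.2.1)‖ =
      Real.exp (-(X.2.2.1 * X.2.2.2.1) / X.2.2.2.2.1) := by
    rw [norm_exp]; congr 1; simp
  rw [charNum, norm_mul, norm_mul, hdelay, mul_one, norm_real, Real.norm_eq_abs, ← hdamp]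
  gcongr
  exact (norm_sub_le _ _).trans_eq (by rw [norm_one])

theorem sq_le_norm_charDen_I_mul (X : Param) (t : ℝ) : t ^ 2 ≤ ‖charDen X (I * t)‖ := by
  have habs_im : ∀ a : ℝ, |t| ≤ ‖I * t + a‖ := fun a => by
    simpa using abs_im_le_norm (I * t + a)
  rw [charDen, norm_mul, ← sq_abs, sq]
  exact mul_le_mul (habs_im _) (habs_im _) (abs_nonneg t) (norm_nonneg _)

theorem charNum_ne_charDen (X : Param) : charNum X ≠ charDen X := by
  intro h
  set C := |X.2.1| * (1 + Real.exp (-(X.2.2.1 * X.2.2.2.1) / X.2.2.2.2.1))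
  have hC : 0 ≤ C := by positivity
  have hnum := norm_charNum_I_mul_le X (C + 1)
  have hden := sq_le_norm_charDen_I_mul X (C + 1)
  rw [h] at hnum
  nlinarith

theorem charFun_not_eventually_eq_zero {X : Param} {z₀ : ℂ} (hz₀ : charDen X z₀ ≠ 0) :
    ¬ ∀ᶠ z in 𝓝 z₀, charFun X z = 0 := by
  intro hzero
  have hden : ∀ᶠ z in 𝓝 z₀, charDen X z ≠ 0 :=
    (differentiable_charDen X).continuous.continuousAt.eventually_ne hz₀
  have heq : charNum X =ᶠ[𝓝 z₀] charDen X := by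
    filter_upwards [hzero, hden] with z hz hdz
    rwa [charFun_eq_one_sub_div, sub_eq_zero, eq_comm, div_eq_one_iff_eq hdz] at hz
  refine charNum_ne_charDen X (AnalyticOnNhd.eq_of_eventuallyEq (𝕜 := ℂ) ?_ ?_ heq)
  · exact fun z _ => (differentiable_charNum X).analyticAt z
  · exact fun z _ => (differentiable_charDen X).analyticAt z

-- Outside the domain `charFun X z = 1` by junk values: for `f = 0` the damping term is
-- `exp 0 = 1`, and for a vanishing denominator the quotient is `0`.
theorem mem_charFunDomain_of_charFun_eq_zero {X : Param} {z : ℂ} (h : charFun X z = 0) :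
    (X, z) ∈ charFunDomain := by
  constructor
  · intro hf
    simp only at hf
    simp [charFun, hf] at h
  · intro hd
    simp [charFun_eq_one_sub_div, hd] at h

theorem isOpen_setOf_exists_re_pos_charFun_eq_zero :
    IsOpen {X : Param | ∃ lam : ℂ, 0 < lam.re ∧ charFun X lam = 0} := by
  refine isOpen_iff_eventually.mpr fun X₀ ⟨lam₀, hre, hroot⟩ => ?_
  have h₀ := mem_charFunDomain_of_charFun_eq_zero hroot
  filter_upwards [eventually_exists_mem_ball_eq_zero isOpen_charFunDomain continuousOn_charFun
    (fun p hp => differentiableAt_charFun hp.2) h₀ hroot (charFun_not_eventually_eq_zero h₀.2)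
    hre] with X ⟨z, hz, hzero⟩
  have hre_close : |(z - lam₀).re| < lam₀.re :=
    (abs_re_le_norm _).trans_lt (mem_ball_iff_norm.mp hz)
  rw [sub_re, abs_lt] at hre_close
  exact ⟨z, by linarith [hre_close.1], hzero⟩

/-- the region `R₊` of parameters whose characteristic function
has a root with positive real part is (relatively) open in `P`. -/
theorem Rplus_isOpen :
    IsOpen (Subtype.val ⁻¹'
        {X : Param | ∃ lam : ℂ, 0 < lam.re ∧ charFun X lam = 0} :
      Set paramSet) :=
  isOpen_setOf_exists_re_pos_charFun_eq_zero.preimage continuous_subtype_val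
end
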